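/- Let 0 ≤ λ ≤ 1/2 and suppose g : (0,1) → ℝ is nonnegative, measurable, and satisfies g(t) ≤ A/t + B/(1−t) for all t ∈ (0,1), where A, B ≥ 0 are constants. Then ∫_{1/2}^{1} |(1−t)·(1−λ−t)|·g(t) dt ≤ [(1−λ)·ln(2(1−λ)²) + (20λ − 8λ² − 5)/8]·A + [λ² − (4λ−1)/8]·B. -/

import Mathlib

/-!
On `(0, 1)` the hypothesis gives `(1 - t) * g t ≤ A * (1 - t) / t + B`, so with `c = 1 - λ` the
integrand is at most `|c - t| * (A * (1 - t) / t + B)`. As `1/2 ≤ c ≤ 1`, splitting the integral of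
this majorant at `c` leaves two elementary integrals, whose sum is exactly the claimed bound.
-/

open MeasureTheory Set Real

theorem intervalIntegral.integral_le_of_nonneg_of_le_Ioo {f F : ℝ → ℝ} {a b : ℝ} (hab : a ≤ b)
    (hfm : AEStronglyMeasurable f (volume.restrict (uIoc a b)))
    (hF : IntervalIntegrable F volume a b)
    (hf0 : ∀ t ∈ Ioo a b, 0 ≤ f t) (hfF : ∀ t ∈ Ioo a b, f t ≤ F t) :
    ∫ t in a..b, f t ≤ ∫ t in a..b, F t := by
  have hmem : ∀ᵐ t ∂volume.restrict (uIoc a b), t ∈ Ioo a b := by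
    rw [uIoc_of_le hab, ← Measure.restrict_congr_set Ioo_ae_eq_Ioc]
    exact ae_restrict_mem measurableSet_Ioo
  have hf : IntervalIntegrable f volume a b :=
    hF.mono_fun' hfm <| hmem.mono fun t ht =>
      (Real.norm_of_nonneg (hf0 t ht)).trans_le (hfF t ht)
  exact intervalIntegral.integral_mono_on_of_le_Ioo hab hf hF hfF

theorem intervalIntegral.integral_abs_sub_mul {f : ℝ → ℝ} {a b c : ℝ} (hac : a ≤ c)
    (hcb : c ≤ b) (hf : IntervalIntegrable f volume a b) :
    ∫ t in a..b, |c - t| * f t = (∫ t in a..c, (c - t) * f t) - ∫ t in c..b, (c - t) * f t := by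
  have hc : c ∈ uIcc a b := by rw [uIcc_of_le (hac.trans hcb)]; exact ⟨hac, hcb⟩
  have habs : ∀ {x y : ℝ}, IntervalIntegrable f volume x y →
      IntervalIntegrable (fun t => |c - t| * f t) volume x y := fun h =>
    h.continuousOn_mul (by fun_prop)
  rw [← intervalIntegral.integral_add_adjacent_intervals
      (habs (hf.mono_set (uIcc_subset_uIcc_left hc)))
      (habs (hf.mono_set (uIcc_subset_uIcc_right hc))),
    sub_eq_add_neg, ← intervalIntegral.integral_neg]
  congr 1
  · refine intervalIntegral.integral_congr fun t ht => ?_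
    rw [uIcc_of_le hac] at ht
    simp only [abs_of_nonneg (sub_nonneg.2 ht.2)]
  · refine intervalIntegral.integral_congr fun t ht => ?_
    rw [uIcc_of_le hcb] at ht
    simp only [abs_of_nonpos (sub_nonpos.2 ht.1), neg_mul]

/-- `(1 - t)` times the assumed bound `A / t + B / (1 - t)` on `g t`. -/
noncomputable def kernelWeight (A B t : ℝ) : ℝ :=
  A * ((1 - t) / t) + B

noncomputable def kernelPrimitive (A B c t : ℝ) : ℝ :=
  A * (c * log t - (1 + c) * t + t ^ 2 / 2) + B * (c * t - t ^ 2 / 2)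

theorem mul_le_abs_sub_mul_kernelWeight {A B c t x : ℝ} (ht : t ∈ Ioo (0 : ℝ) 1)
    (hx : x ≤ A / t + B / (1 - t)) :
    |(1 - t) * (c - t)| * x ≤ |c - t| * kernelWeight A B t := by
  have h1t : 0 < 1 - t := sub_pos.2 ht.2
  calc |(1 - t) * (c - t)| * x = |c - t| * ((1 - t) * x) := by
        rw [abs_mul, abs_of_pos h1t]; ring
    _ ≤ |c - t| * ((1 - t) * (A / t + B / (1 - t))) := by gcongr
    _ = |c - t| * kernelWeight A B t := by rw [kernelWeight]; field_simp

theorem intervalIntegrable_kernelWeight (A B : ℝ) {a b : ℝ} (h0 : (0 : ℝ) ∉ uIcc a b) :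
    IntervalIntegrable (kernelWeight A B) volume a b := by
  have hne : ∀ t ∈ uIcc a b, t ≠ 0 := fun t ht => ne_of_mem_of_not_mem ht h0
  exact ContinuousOn.intervalIntegrable (by unfold kernelWeight; fun_prop (disch := assumption))

theorem hasDerivAt_kernelPrimitive (A B c : ℝ) {t : ℝ} (ht : t ≠ 0) :
    HasDerivAt (kernelPrimitive A B c) ((c - t) * kernelWeight A B t) t := by
  have hlog := (hasDerivAt_log ht).const_mul c
  have hid := hasDerivAt_id' t
  have hsq : HasDerivAt (fun t : ℝ => t ^ 2 / 2) t t := by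
    simpa using (hasDerivAt_pow 2 t).div_const 2
  refine ((((hlog.sub (hid.const_mul (1 + c))).add hsq).const_mul A).add
    (((hid.const_mul c).sub hsq).const_mul B)).congr_deriv ?_
  rw [kernelWeight]
  field_simp
  ring

theorem integral_sub_mul_kernelWeight (A B c : ℝ) {a b : ℝ} (h0 : (0 : ℝ) ∉ uIcc a b) :
    ∫ t in a..b, (c - t) * kernelWeight A B t
      = kernelPrimitive A B c b - kernelPrimitive A B c a :=
  intervalIntegral.integral_eq_sub_of_hasDerivAt
    (fun t ht => hasDerivAt_kernelPrimitive A B c (ne_of_mem_of_not_mem ht h0))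
    ((intervalIntegrable_kernelWeight A B h0).continuousOn_mul (by fun_prop))

theorem kernel_integral_bound_right_first_case_general
    (lam : ℝ) (hlam0 : 0 ≤ lam) (hlam1 : lam ≤ 1 / 2)
    (g : ℝ → ℝ) (hg : Measurable g) (hg0 : ∀ t ∈ Ioo (0 : ℝ) 1, 0 ≤ g t)
    (A B : ℝ)
    (hgb : ∀ t ∈ Ioo (0 : ℝ) 1, g t ≤ A / t + B / (1 - t)) :
    (∫ t in (1 / 2 : ℝ)..1, |(1 - t) * (1 - lam - t)| * g t)
      ≤ ((1 - lam) * Real.log (2 * (1 - lam) ^ 2)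
            + (20 * lam - 8 * lam ^ 2 - 5) / 8) * A
        + (lam ^ 2 - (4 * lam - 1) / 8) * B := by
  set c := 1 - lam
  have hc : 0 < c := by linarith
  have hIoo : Ioo (1 / 2 : ℝ) 1 ⊆ Ioo 0 1 := Ioo_subset_Ioo_left (by norm_num)
  have hweight := intervalIntegrable_kernelWeight A B
    (notMem_uIcc_of_lt (by norm_num : (0 : ℝ) < 1 / 2) one_pos)
  calc (∫ t in (1 / 2 : ℝ)..1, |(1 - t) * (c - t)| * g t)
      ≤ ∫ t in (1 / 2 : ℝ)..1, |c - t| * kernelWeight A B t :=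
        intervalIntegral.integral_le_of_nonneg_of_le_Ioo (by norm_num)
          (by fun_prop : Measurable fun t => |(1 - t) * (c - t)| * g t).aestronglyMeasurable
          (hweight.continuousOn_mul (by fun_prop))
          (fun t ht => mul_nonneg (abs_nonneg _) (hg0 t (hIoo ht)))
          (fun t ht => mul_le_abs_sub_mul_kernelWeight (hIoo ht) (hgb t (hIoo ht)))
    _ = (kernelPrimitive A B c c - kernelPrimitive A B c (1 / 2))
          - (kernelPrimitive A B c 1 - kernelPrimitive A B c c) := by
        rw [intervalIntegral.integral_abs_sub_mul (by linarith) (by linarith) hweight,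
          integral_sub_mul_kernelWeight A B c (notMem_uIcc_of_lt (by norm_num) hc),
          integral_sub_mul_kernelWeight A B c (notMem_uIcc_of_lt hc one_pos)]
    _ = _ := by
        simp only [kernelPrimitive, log_one, one_div, log_inv,
          log_mul two_ne_zero (pow_ne_zero 2 hc.ne'), log_pow]
        ring

theorem kernel_integral_bound_right_first_case
    (lam : ℝ) (hlam0 : 0 ≤ lam) (hlam1 : lam ≤ 1 / 2)
    (g : ℝ → ℝ) (hg : Measurable g) (hg0 : ∀ t ∈ Ioo (0 : ℝ) 1, 0 ≤ g t)
    (A B : ℝ) (hA : 0 ≤ A) (hB : 0 ≤ B)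
    (hgb : ∀ t ∈ Ioo (0 : ℝ) 1, g t ≤ A / t + B / (1 - t)) :
    (∫ t in (1 / 2 : ℝ)..1, |(1 - t) * (1 - lam - t)| * g t)
      ≤ ((1 - lam) * Real.log (2 * (1 - lam) ^ 2)
            + (20 * lam - 8 * lam ^ 2 - 5) / 8) * A
        + (lam ^ 2 - (4 * lam - 1) / 8) * B :=
  kernel_integral_bound_right_first_case_general lam hlam0 hlam1 g hg hg0 A B hgb
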